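/- Let η be a smooth solution of the uniformly compressing curve-shortening flow with |∂_s η(t,s)| ≡ L(t), ∫₀¹ η(t,s) ds = 0, L(0) = L₀ > 0, and extinction time t* = (1/2)∫₀¹|η₀|² ds. Then for all t ∈ [0, t*): 2√2 π √(t*−t) ≤ L(t) ≤ L₀ √((t*−t)/t*). -/

import Mathlib

open Real MeasureTheory intervalIntegral

noncomputable section

section helpers

open AddCircle
open scoped ENNReal RealInnerProductSpace

lemma parseval_cont (G : C(AddCircle (1:ℝ), ℂ)) :
    ∑' n : ℤ, ‖fourierCoeff (⇑G) n‖ ^ 2 = ∫ t : AddCircle (1:ℝ), ‖G t‖ ^ 2 ∂haarAddCircle := by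
  have h := tsum_sq_fourierCoeff (ContinuousMap.toLp (E := ℂ) 2 haarAddCircle ℂ G)
  simp_rw [fourierCoeff_toLp] at h
  rw [h]
  apply MeasureTheory.integral_congr_ae
  filter_upwards [ContinuousMap.coeFn_toLp (p := 2) (𝕜 := ℂ) haarAddCircle G] with x hx
  rw [hx]

lemma summable_sq_fourierCoeff (G : C(AddCircle (1:ℝ), ℂ)) :
    Summable fun n : ℤ => ‖fourierCoeff (⇑G) n‖ ^ 2 := by
  set F := ContinuousMap.toLp (E := ℂ) 2 haarAddCircle ℂ G
  have h1 : Summable fun n : ℤ => ‖fourierBasis.repr F n‖ ^ ((2:ℝ≥0∞).toReal) := by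
    exact (lp.memℓp (fourierBasis.repr F)).summable (by norm_num)
  have : ∀ n : ℤ, ‖fourierBasis.repr F n‖ ^ ((2:ℝ≥0∞).toReal) = ‖fourierCoeff (⇑G) n‖ ^ 2 := by
    intro n
    rw [fourierBasis_repr, fourierCoeff_toLp]
    norm_num
  exact (summable_congr this).mp h1

def liftCM (u : ℝ → ℂ) (hu : Continuous u) (hper : Function.Periodic u 1) :
    C(AddCircle (1:ℝ), ℂ) :=
  ⟨AddCircle.liftIco 1 0 u, AddCircle.liftIco_zero_continuous (by simpa using (hper 0).symm) hu.continuousOn⟩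

lemma fourierCoeff_liftCM (u : ℝ → ℂ) (hu : Continuous u) (hper : Function.Periodic u 1) (n : ℤ) :
    fourierCoeff (⇑(liftCM u hu hper)) n = fourierCoeffOn zero_lt_one u n := by
  have h := fourierCoeff_liftIco_eq (T := 1) (a := 0) u n
  rw [show (⇑(liftCM u hu hper)) = AddCircle.liftIco 1 0 u from rfl, h]
  congr 1 <;> simp [zero_add]

lemma parseval_interval (u : ℝ → ℂ) (hu : Continuous u) (hper : Function.Periodic u 1) :
    ∑' n : ℤ, ‖fourierCoeffOn zero_lt_one u n‖ ^ 2 = ∫ s in (0:ℝ)..1, ‖u s‖ ^ 2 := by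
  have h := parseval_cont (liftCM u hu hper)
  simp_rw [fourierCoeff_liftCM u hu hper] at h
  rw [h]
  have hvol : (volume : Measure (AddCircle (1:ℝ))) = haarAddCircle := by
    rw [volume_eq_smul_haarAddCircle]; simp
  rw [← hvol]
  have h2 := AddCircle.intervalIntegral_preimage 1 0 (fun b : AddCircle (1:ℝ) => ‖liftCM u hu hper b‖ ^ 2)
  rw [zero_add] at h2
  rw [← h2]
  apply intervalIntegral.integral_congr_ae
  have hae : ∀ᵐ x : ℝ, x ≠ 1 := by
    refine MeasureTheory.ae_iff.mpr ?_
    have hs : {a : ℝ | ¬ a ≠ 1} = {1} := by ext a; simp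
    rw [hs]; exact measure_singleton 1
  filter_upwards [hae] with x hx hx'
  rw [Set.uIoc_of_le zero_le_one] at hx'
  have hxI : x ∈ Set.Ico (0:ℝ) (0 + 1) := by
    constructor
    · exact le_of_lt hx'.1
    · rw [zero_add]; exact lt_of_le_of_ne hx'.2 (by simpa using hx)
  show ‖(liftCM u hu hper) (x : AddCircle (1:ℝ))‖ ^ 2 = ‖u x‖ ^ 2
  rw [show (liftCM u hu hper) (x : AddCircle (1:ℝ)) = AddCircle.liftIco 1 0 u x from rfl,
    AddCircle.liftIco_coe_apply hxI]

lemma summable_interval (u : ℝ → ℂ) (hu : Continuous u) (hper : Function.Periodic u 1) :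
    Summable fun n : ℤ => ‖fourierCoeffOn zero_lt_one u n‖ ^ 2 := by
  have h := summable_sq_fourierCoeff (liftCM u hu hper)
  simp_rw [fourierCoeff_liftCM u hu hper] at h
  exact h

lemma wirtinger_real (f : ℝ → ℝ) (hf : ContDiff ℝ (⊤ : ℕ∞) f)
    (hper : Function.Periodic f 1)
    (hmean : (∫ s in (0:ℝ)..1, f s) = 0) :
    (∫ s in (0:ℝ)..1, f s ^ 2) ≤ (1/(4*π^2)) * ∫ s in (0:ℝ)..1, (deriv f s) ^ 2 := by
  have hdf : Differentiable ℝ f := hf.differentiable (by simp)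
  have hdf' : Continuous (deriv f) := hf.continuous_deriv (by simp)
  have hper' : Function.Periodic (deriv f) 1 := by
    intro x
    have : deriv (fun y => f (y + 1)) x = deriv f (x + 1) := deriv_comp_add_const f 1 x
    rw [← this]
    congr 1
    funext y; exact hper y
  set g : ℝ → ℂ := fun x => (f x : ℂ) with hg
  set g' : ℝ → ℂ := fun x => Complex.ofReal (deriv f x) with hg'
  have hgc : Continuous g := Complex.continuous_ofReal.comp hf.continuous
  have hgc' : Continuous g' := Complex.continuous_ofReal.comp hdf'
  have hgper : Function.Periodic g 1 := fun x => by simp [hg, hper x]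
  have hgper' : Function.Periodic g' 1 := fun x => by simp [hg', hper' x]
  have hd : ∀ x, HasDerivAt g (g' x) x := fun x => ((hdf x).hasDerivAt).ofReal_comp
  -- Fourier coefficient relations
  have hc0 : fourierCoeffOn zero_lt_one g 0 = 0 := by
    rw [fourierCoeffOn_eq_integral]
    simp only [neg_zero, fourier_zero, one_smul, sub_zero, div_one, one_smul]
    rw [intervalIntegral.integral_ofReal, hmean]
    simp
  have hcn : ∀ n : ℤ, n ≠ 0 →
      ‖fourierCoeffOn zero_lt_one g n‖ ^ 2
        ≤ (1/(4*π^2)) * ‖fourierCoeffOn zero_lt_one g' n‖ ^ 2 := by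
    intro n hn
    have hrel := fourierCoeffOn_of_hasDerivAt zero_lt_one hn
      (fun x _ => hd x) (hgc'.intervalIntegrable 0 1)
    have hb : g 1 - g 0 = 0 := by
      have := hgper 0; simp only [zero_add] at this; rw [this]; simp
    rw [hb, mul_zero, zero_sub] at hrel
    rw [hrel, norm_mul, norm_neg, norm_mul, mul_pow, mul_pow]
    have h1 : ‖(1:ℂ) / (-2 * ↑π * Complex.I * ↑n)‖ = 1 / (2 * π * |(n:ℝ)|) := by
      rw [norm_div, norm_one]
      congr 1
      simp [map_mul, Complex.norm_real, Complex.norm_I,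
        Complex.norm_intCast, abs_of_pos Real.pi_pos]
    rw [h1]
    rw [show ‖((1:ℝ):ℂ) - ((0:ℝ):ℂ)‖ = 1 by norm_num, one_pow, one_mul]
    have hn1 : (1:ℝ) ≤ |(n:ℝ)| := by
      rw [← Int.cast_abs]
      exact_mod_cast Int.one_le_abs hn
    have hπ : (0:ℝ) < π := Real.pi_pos
    have hd1 : (1 / (2 * π * |(n:ℝ)|)) ^ 2 ≤ 1 / (4 * π ^ 2) := by
      rw [div_pow, one_pow]
      rw [div_le_div_iff₀ (by positivity) (by positivity)]
      nlinarith [sq_nonneg (|(n:ℝ)| - 1), sq_nonneg π]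
    calc (1 / (2 * π * |(n:ℝ)|)) ^ 2 * ‖fourierCoeffOn zero_lt_one g' n‖ ^ 2
        ≤ (1 / (4 * π ^ 2)) * ‖fourierCoeffOn zero_lt_one g' n‖ ^ 2 := by
          apply mul_le_mul_of_nonneg_right hd1 (by positivity)
      _ = _ := rfl
  -- assemble
  have hsumg := summable_interval g hgc hgper
  have hsumg' := summable_interval g' hgc' hgper'
  have hP := parseval_interval g hgc hgper
  have hP' := parseval_interval g' hgc' hgper'
  have hterm : ∀ n : ℤ, ‖fourierCoeffOn zero_lt_one g n‖ ^ 2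
      ≤ (1/(4*π^2)) * ‖fourierCoeffOn zero_lt_one g' n‖ ^ 2 := by
    intro n
    by_cases hn : n = 0
    · subst hn; rw [hc0]; simp; positivity
    · exact hcn n hn
  have hle := Summable.tsum_le_tsum hterm hsumg (hsumg'.mul_left _)
  rw [hP, tsum_mul_left, hP'] at hle
  have hnormg : ∀ s, ‖g s‖ ^ 2 = f s ^ 2 := fun s => by
    simp [hg, Complex.norm_real, sq_abs]
  have hnormg' : ∀ s, ‖g' s‖ ^ 2 = deriv f s ^ 2 := fun s => by
    simp [hg', Complex.norm_real, sq_abs]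
  simp_rw [hnormg, hnormg'] at hle
  exact hle

lemma norm_sq_euclidean {d : ℕ} (x : EuclideanSpace ℝ (Fin d)) :
    ‖x‖ ^ 2 = ∑ i, x i ^ 2 := by
  rw [EuclideanSpace.norm_eq, Real.sq_sqrt (by positivity)]
  congr 1; funext i; rw [Real.norm_eq_abs, sq_abs]

lemma wirtinger_vec {d : ℕ} (v : ℝ → EuclideanSpace ℝ (Fin d)) (hv : ContDiff ℝ (⊤ : ℕ∞) v)
    (hper : Function.Periodic v 1) (hmean : (∫ s in (0:ℝ)..1, v s) = 0) :
    (∫ s in (0:ℝ)..1, ‖v s‖ ^ 2) ≤ (1/(4*π^2)) * ∫ s in (0:ℝ)..1, ‖deriv v s‖ ^ 2 := by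
  have hdv : Differentiable ℝ v := hv.differentiable (by simp)
  have hderiv_i : ∀ (i : Fin d) (s : ℝ),
      deriv (fun x => v x i) s = deriv v s i := by
    intro i s
    exact (((EuclideanSpace.proj i) :
      EuclideanSpace ℝ (Fin d) →L[ℝ] ℝ).hasFDerivAt.comp_hasDerivAt s
      (hdv s).hasDerivAt).deriv
  have hcd_i : ∀ i : Fin d, ContDiff ℝ (⊤ : ℕ∞) (fun x => v x i) := fun i =>
    ((EuclideanSpace.proj i : EuclideanSpace ℝ (Fin d) →L[ℝ] ℝ).contDiff).comp hv
  have hmean_i : ∀ i : Fin d, (∫ s in (0:ℝ)..1, v s i) = 0 := by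
    intro i
    have := ((EuclideanSpace.proj i : EuclideanSpace ℝ (Fin d) →L[ℝ] ℝ)).intervalIntegral_comp_comm
      (hv.continuous.intervalIntegrable (μ := volume) 0 1)
    have h2 : (∫ s in (0:ℝ)..1, v s i) = (EuclideanSpace.proj i) (∫ s in (0:ℝ)..1, v s) := this
    rw [h2, hmean]
    simp
  have hper_i : ∀ i : Fin d, Function.Periodic (fun x => v x i) 1 := fun i x => by
    simp [hper x]
  have hW : ∀ i : Fin d, (∫ s in (0:ℝ)..1, (v s i) ^ 2)
      ≤ (1/(4*π^2)) * ∫ s in (0:ℝ)..1, (deriv (fun x => v x i) s) ^ 2 := fun i =>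
    wirtinger_real _ (hcd_i i) (hper_i i) (hmean_i i)
  have hL : (∫ s in (0:ℝ)..1, ‖v s‖ ^ 2) = ∑ i, ∫ s in (0:ℝ)..1, (v s i) ^ 2 := by
    rw [← intervalIntegral.integral_finset_sum]
    · congr 1; funext s; exact norm_sq_euclidean (v s)
    · intro i _
      exact (((continuous_apply i).comp (by exact (PiLp.continuous_ofLp 2 _).comp hv.continuous)).pow 2).intervalIntegrable 0 1
  have hR : (∫ s in (0:ℝ)..1, ‖deriv v s‖ ^ 2)
      = ∑ i, ∫ s in (0:ℝ)..1, (deriv (fun x => v x i) s) ^ 2 := by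
    rw [← intervalIntegral.integral_finset_sum]
    · congr 1; funext s
      rw [norm_sq_euclidean (deriv v s)]
      congr 1; funext i; rw [hderiv_i i s]
    · intro i _
      have hc : Continuous fun s => deriv (fun x => v x i) s := (hcd_i i).continuous_deriv (by simp)
      exact (hc.pow 2).intervalIntegrable 0 1
  rw [hL, hR, Finset.mul_sum]
  exact Finset.sum_le_sum fun i _ => hW i

section Toolkit

variable {E : Type*} [NormedAddCommGroup E] [NormedSpace ℝ E]

lemma periodic_deriv' {f : ℝ → E} (h : Function.Periodic f 1) :
    Function.Periodic (deriv f) 1 := by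
  intro x
  have h1 : deriv (fun y => f (y + 1)) x = deriv f (x + 1) := deriv_comp_add_const f 1 x
  rw [← h1]
  congr 1
  funext y; exact h y

variable {F : ℝ × ℝ → E}

lemma pt_hasDerivAt_snd (hF : ContDiff ℝ (⊤ : ℕ∞) F) (t s : ℝ) :
    HasDerivAt (fun r => F (t, r)) (fderiv ℝ F (t, s) (0, 1)) s := by
  have hc : HasDerivAt (fun r : ℝ => ((t, r) : ℝ × ℝ)) ((0 : ℝ), (1 : ℝ)) s :=
    (hasDerivAt_const s t).prodMk (hasDerivAt_id s)
  exact ((hF.differentiable (by simp) (t, s)).hasFDerivAt).comp_hasDerivAt s hc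

lemma pt_hasDerivAt_fst (hF : ContDiff ℝ (⊤ : ℕ∞) F) (t s : ℝ) :
    HasDerivAt (fun u => F (u, s)) (fderiv ℝ F (t, s) (1, 0)) t := by
  have hc : HasDerivAt (fun u : ℝ => ((u, s) : ℝ × ℝ)) ((1 : ℝ), (0 : ℝ)) t :=
    (hasDerivAt_id t).prodMk (hasDerivAt_const t s)
  exact ((hF.differentiable (by simp) (t, s)).hasFDerivAt).comp_hasDerivAt t hc

lemma contDiff_pderiv (hF : ContDiff ℝ (⊤ : ℕ∞) F) (w : ℝ × ℝ) :
    ContDiff ℝ (⊤ : ℕ∞) (fun p => fderiv ℝ F p w) :=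
  (hF.fderiv_right (by simp)).clm_apply contDiff_const

lemma clairaut_pt (hF : ContDiff ℝ (⊤ : ℕ∞) F) (t s : ℝ) :
    deriv (fun u => fderiv ℝ F (u, s) (0, 1)) t
      = deriv (fun r => fderiv ℝ F (t, r) (1, 0)) s := by
  set f' := fderiv ℝ F with hf'
  have hdf : ∀ y, HasFDerivAt F (f' y) y := fun y =>
    (hF.differentiable (by simp) y).hasFDerivAt
  have hf'd : ContDiff ℝ (⊤ : ℕ∞) f' := hF.fderiv_right (by simp)
  set H := fderiv ℝ f' (t, s) with hH
  have hHd : HasFDerivAt f' H (t, s) := (hf'd.differentiable (by simp) (t, s)).hasFDerivAt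
  have symm := second_derivative_symmetric hdf hHd
  have h1 : HasDerivAt (fun u => f' (u, s) (0, 1)) ((H (1, 0)) (0, 1)) t := by
    have happ : HasFDerivAt (fun p => f' p ((0 : ℝ), (1 : ℝ)))
        ((ContinuousLinearMap.apply ℝ E ((0 : ℝ), (1 : ℝ))).comp H) (t, s) :=
      (ContinuousLinearMap.apply ℝ E ((0 : ℝ), (1 : ℝ))).hasFDerivAt.comp (t, s) hHd
    have hc : HasDerivAt (fun u : ℝ => ((u, s) : ℝ × ℝ)) ((1 : ℝ), (0 : ℝ)) t :=
      (hasDerivAt_id t).prodMk (hasDerivAt_const t s)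
    exact happ.comp_hasDerivAt t hc
  have h2 : HasDerivAt (fun r => f' (t, r) (1, 0)) ((H (0, 1)) (1, 0)) s := by
    have happ : HasFDerivAt (fun p => f' p ((1 : ℝ), (0 : ℝ)))
        ((ContinuousLinearMap.apply ℝ E ((1 : ℝ), (0 : ℝ))).comp H) (t, s) :=
      (ContinuousLinearMap.apply ℝ E ((1 : ℝ), (0 : ℝ))).hasFDerivAt.comp (t, s) hHd
    have hc : HasDerivAt (fun r : ℝ => ((t, r) : ℝ × ℝ)) ((0 : ℝ), (1 : ℝ)) s :=
      (hasDerivAt_const s t).prodMk (hasDerivAt_id s)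
    exact happ.comp_hasDerivAt s hc
  rw [h1.deriv, h2.deriv, symm]

end Toolkit

section DUI

lemma integral_deriv_periodic (w w' : ℝ → ℝ) (hd : ∀ x, HasDerivAt w (w' x) x)
    (hc : Continuous w') (hper : Function.Periodic w 1) :
    (∫ s in (0:ℝ)..1, w' s) = 0 := by
  rw [intervalIntegral.integral_eq_sub_of_hasDerivAt (fun x _ => hd x)
    (hc.intervalIntegrable 0 1)]
  have := hper 0
  rw [zero_add] at this
  rw [this, sub_self]

lemma deriv_under_integral (Φ DΦ : ℝ → ℝ → ℝ)
    (hΦ : ∀ x, Continuous (Φ x))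
    (hD : Continuous fun p : ℝ × ℝ => DΦ p.1 p.2)
    (hdiff : ∀ x s, HasDerivAt (fun u => Φ u s) (DΦ x s) x)
    (t₀ : ℝ) :
    HasDerivAt (fun x => ∫ s in (0:ℝ)..1, Φ x s) (∫ s in (0:ℝ)..1, DΦ t₀ s) t₀ := by
  obtain ⟨C, hC⟩ : ∃ C, ∀ p ∈ (Set.Icc (t₀ - 1) (t₀ + 1) ×ˢ Set.Icc (0:ℝ) 1),
      ‖DΦ p.1 p.2‖ ≤ C := by
    rcases (((isCompact_Icc (a := t₀ - 1) (b := t₀ + 1)).prod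
      (isCompact_Icc (a := (0:ℝ)) (b := 1))).exists_bound_of_continuousOn
      hD.continuousOn) with ⟨C, hC⟩
    exact ⟨C, hC⟩
  have key := intervalIntegral.hasDerivAt_integral_of_dominated_loc_of_deriv_le
    (F := Φ) (F' := DΦ) (x₀ := t₀) (a := 0) (b := 1) (μ := volume)
    (bound := fun _ => C) (Metric.ball_mem_nhds t₀ zero_lt_one)
    (Filter.Eventually.of_forall fun x => ((hΦ x).aestronglyMeasurable).restrict)
    ((hΦ t₀).intervalIntegrable 0 1)
    (((hD.comp (Continuous.prodMk_right t₀)).aestronglyMeasurable).restrict)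
    (Filter.Eventually.of_forall fun s hs x hx => by
      apply hC (x, s)
      constructor
      · have := Metric.mem_ball.mp hx
        rw [Real.dist_eq] at this
        constructor <;> [linarith [abs_lt.mp this] ; linarith [(abs_lt.mp this).2]]
      · rw [Set.uIoc_of_le zero_le_one] at hs
        exact ⟨le_of_lt hs.1, hs.2⟩)
    (intervalIntegrable_const)
    (Filter.Eventually.of_forall fun s _ x _ => hdiff x s)
  exact key.2

end DUI


set_option maxHeartbeats 1600000 in
/-- Decay rate of the length near the extinction time `t* = (1/2)∫|η₀|²`:
`2√2 π √(t*-t) ≤ L(t) ≤ L₀ √((t*-t)/t*)` for `t ∈ [0, t*)`. -/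
theorem stmt6 (d : ℕ)
    (η : ℝ → ℝ → EuclideanSpace ℝ (Fin d)) (σt : ℝ → ℝ → ℝ) (L : ℝ → ℝ)
    (hη : ContDiff ℝ (⊤ : ℕ∞) (fun p : ℝ × ℝ => η p.1 p.2))
    (hσt : ContDiff ℝ (⊤ : ℕ∞) (fun p : ℝ × ℝ => σt p.1 p.2))
    (hperη : ∀ t, Function.Periodic (η t) 1)
    (hperσ : ∀ t, Function.Periodic (σt t) 1)
    (hLpos : ∀ t, 0 < L t)
    (hspeed : ∀ t s, ‖deriv (η t) s‖ = L t)
    (hflow : ∀ t s, deriv (fun u => η u s) t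
        = ((L t) ^ 2)⁻¹ • deriv (fun r => σt t r • deriv (η t) r) s)
    (hmult : ∀ t s, deriv (deriv (σt t)) s
        - ((L t) ^ 2)⁻¹ * σt t s * ‖deriv (deriv (η t)) s‖ ^ 2
        = -((L t) ^ 2)⁻¹ * ∫ r in (0:ℝ)..1, σt t r * ‖deriv (deriv (η t)) r‖ ^ 2)
    (hσmean : ∀ t, (∫ s in (0:ℝ)..1, σt t s) = 1)
    (hmean : ∀ t, (∫ s in (0:ℝ)..1, η t s) = 0)
    (tstar : ℝ) (htstar : tstar = (1/2) * ∫ s in (0:ℝ)..1, ‖η 0 s‖ ^ 2) :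
    ∀ t ∈ Set.Ico (0:ℝ) tstar,
      2 * Real.sqrt 2 * π * Real.sqrt (tstar - t) ≤ L t ∧
      L t ≤ L 0 * Real.sqrt ((tstar - t) / tstar) := by
  -- jointly smooth partial-derivative fields
  set F : ℝ × ℝ → EuclideanSpace ℝ (Fin d) := fun p => η p.1 p.2 with hFdef
  set Sg : ℝ × ℝ → ℝ := fun p => σt p.1 p.2 with hSgdef
  set A : ℝ × ℝ → EuclideanSpace ℝ (Fin d) := fun p => fderiv ℝ F p (0, 1) with hAdef
  set B : ℝ × ℝ → EuclideanSpace ℝ (Fin d) := fun p => fderiv ℝ F p (1, 0) with hBdef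
  have hA : ContDiff ℝ (⊤ : ℕ∞) A := contDiff_pderiv hη _
  have hB : ContDiff ℝ (⊤ : ℕ∞) B := contDiff_pderiv hη _
  set A2 : ℝ × ℝ → EuclideanSpace ℝ (Fin d) := fun p => fderiv ℝ A p (0, 1) with hA2def
  set B1 : ℝ × ℝ → EuclideanSpace ℝ (Fin d) := fun p => fderiv ℝ B p (0, 1) with hB1def
  have hA2 : ContDiff ℝ (⊤ : ℕ∞) A2 := contDiff_pderiv hA _
  have hB1 : ContDiff ℝ (⊤ : ℕ∞) B1 := contDiff_pderiv hB _
  set sa : ℝ × ℝ → ℝ := fun p => fderiv ℝ Sg p (0, 1) with hsadef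
  have hsa : ContDiff ℝ (⊤ : ℕ∞) sa := contDiff_pderiv hσt _
  set sa2 : ℝ × ℝ → ℝ := fun p => fderiv ℝ sa p (0, 1) with hsa2def
  have hsa2 : ContDiff ℝ (⊤ : ℕ∞) sa2 := contDiff_pderiv hsa _
  -- identifications
  have hAe : ∀ t s, deriv (η t) s = A (t, s) := fun t s => (pt_hasDerivAt_snd hη t s).deriv
  have hderη : ∀ t, deriv (η t) = fun s => A (t, s) := fun t => funext fun s => hAe t s
  have hBe : ∀ t s, deriv (fun u => η u s) t = B (t, s) := fun t s =>
    (pt_hasDerivAt_fst hη t s).deriv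
  have hae : ∀ t s, deriv (σt t) s = sa (t, s) := fun t s => (pt_hasDerivAt_snd hσt t s).deriv
  have hdera : ∀ t, deriv (σt t) = fun s => sa (t, s) := fun t => funext fun s => hae t s
  have hA2e : ∀ t s, deriv (deriv (η t)) s = A2 (t, s) := by
    intro t s
    rw [hderη t]
    exact (pt_hasDerivAt_snd hA t s).deriv
  have hsa2e : ∀ t s, deriv (deriv (σt t)) s = sa2 (t, s) := by
    intro t s
    rw [hdera t]
    exact (pt_hasDerivAt_snd hsa t s).deriv
  -- basic pointwise facts
  have hnormA : ∀ t s, ‖A (t, s)‖ = L t := fun t s => by rw [← hAe]; exact hspeed t s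
  have hAA : ∀ t s, ⟪A (t, s), A (t, s)⟫ = (L t) ^ 2 := fun t s => by
    rw [real_inner_self_eq_norm_sq, hnormA]
  have hAA2 : ∀ t s, ⟪A (t, s), A2 (t, s)⟫ = 0 := by
    intro t s
    have hdA : HasDerivAt (fun r => A (t, r)) (A2 (t, s)) s := pt_hasDerivAt_snd hA t s
    have hin : HasDerivAt (fun r => ⟪A (t, r), A (t, r)⟫)
        (⟪A (t, s), A2 (t, s)⟫ + ⟪A2 (t, s), A (t, s)⟫) s := hdA.inner ℝ hdA
    have hconst : (fun r => ⟪A (t, r), A (t, r)⟫) = fun _ => (L t) ^ 2 :=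
      funext fun r => hAA t r
    rw [hconst] at hin
    have h0 : ⟪A (t, s), A2 (t, s)⟫ + ⟪A2 (t, s), A (t, s)⟫ = 0 := by
      have := (hasDerivAt_const s ((L t) ^ 2)).unique hin
      linarith [this]
    have := real_inner_comm (A2 (t, s)) (A (t, s))
    linarith
  have hflow' : ∀ t s, B (t, s)
      = ((L t) ^ 2)⁻¹ • (sa (t, s) • A (t, s) + σt t s • A2 (t, s)) := by
    intro t s
    rw [← hBe, hflow t s]
    congr 1
    have hσd : HasDerivAt (fun r => σt t r) (sa (t, s)) s := pt_hasDerivAt_snd hσt t s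
    have hAd : HasDerivAt (fun r => deriv (η t) r) (A2 (t, s)) s := by
      rw [hderη t]; exact pt_hasDerivAt_snd hA t s
    have := hσd.smul hAd
    rw [HasDerivAt.deriv (f := fun r => σt t r • deriv (η t) r) this]
    rw [← hAe]
    module
  -- periodicity in s
  have hderA : ∀ t, deriv (fun s => A (t, s)) = fun s => A2 (t, s) := fun t =>
    funext fun s => (pt_hasDerivAt_snd hA t s).deriv
  have hdersa : ∀ t, deriv (fun s => sa (t, s)) = fun s => sa2 (t, s) := fun t =>
    funext fun s => (pt_hasDerivAt_snd hsa t s).deriv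
  have hperA : ∀ t, Function.Periodic (fun s => A (t, s)) 1 := by
    intro t
    have := periodic_deriv' (hperη t)
    rwa [hderη t] at this
  have hperB : ∀ t, Function.Periodic (fun s => B (t, s)) 1 := by
    intro t s
    show B (t, s + 1) = B (t, s)
    rw [← hBe t (s + 1), ← hBe t s]
    congr 1
    funext u; exact hperη u s
  have hperA2 : ∀ t, Function.Periodic (fun s => A2 (t, s)) 1 := by
    intro t
    have := periodic_deriv' (hperA t)
    rwa [hderA t] at this
  have hpersa : ∀ t, Function.Periodic (fun s => sa (t, s)) 1 := by
    intro t
    have := periodic_deriv' (hperσ t)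
    rwa [hdera t] at this
  -- continuity in s
  have hcη : ∀ t, Continuous (η t) := fun t => hη.continuous.comp (Continuous.prodMk_right t)
  have hcA : ∀ t, Continuous (fun s => A (t, s)) := fun t =>
    hA.continuous.comp (Continuous.prodMk_right t)
  have hcB : ∀ t, Continuous (fun s => B (t, s)) := fun t =>
    hB.continuous.comp (Continuous.prodMk_right t)
  have hcA2 : ∀ t, Continuous (fun s => A2 (t, s)) := fun t =>
    hA2.continuous.comp (Continuous.prodMk_right t)
  have hcB1 : ∀ t, Continuous (fun s => B1 (t, s)) := fun t =>
    hB1.continuous.comp (Continuous.prodMk_right t)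
  have hcσ : ∀ t, Continuous (σt t) := fun t => hσt.continuous.comp (Continuous.prodMk_right t)
  have hcsa : ∀ t, Continuous (fun s => sa (t, s)) := fun t =>
    hsa.continuous.comp (Continuous.prodMk_right t)
  have hcsa2 : ∀ t, Continuous (fun s => sa2 (t, s)) := fun t =>
    hsa2.continuous.comp (Continuous.prodMk_right t)
  -- the key integral : ∫ ⟪B, η⟫ = -1
  have hI : ∀ t, (∫ s in (0:ℝ)..1, ⟪B (t, s), η t s⟫) = -1 := by
    intro t
    have hL2 : (0:ℝ) < (L t) ^ 2 := pow_pos (hLpos t) 2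
    have hd : ∀ s, HasDerivAt (fun r => ⟪η t r, σt t r • A (t, r)⟫)
        (⟪η t s, σt t s • A2 (t, s) + sa (t, s) • A (t, s)⟫
          + ⟪A (t, s), σt t s • A (t, s)⟫) s := by
      intro s
      have h1 : HasDerivAt (fun r => η t r) (A (t, s)) s := pt_hasDerivAt_snd hη t s
      have h2 : HasDerivAt (fun r => σt t r • A (t, r))
          (σt t s • A2 (t, s) + sa (t, s) • A (t, s)) s :=
        (pt_hasDerivAt_snd hσt t s).smul (pt_hasDerivAt_snd hA t s)
      exact h1.inner ℝ h2
    have hwper : Function.Periodic (fun s => ⟪η t s, σt t s • A (t, s)⟫) 1 := by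
      intro s
      have h1 : A (t, s + 1) = A (t, s) := hperA t s
      simp only []
      rw [hperη t s, hperσ t s, h1]
    have hwc' : Continuous (fun s => ⟪η t s, σt t s • A2 (t, s) + sa (t, s) • A (t, s)⟫
        + ⟪A (t, s), σt t s • A (t, s)⟫) := by
      apply Continuous.add
      · exact (hcη t).inner (((hcσ t).smul (hcA2 t)).add ((hcsa t).smul (hcA t)))
      · exact (hcA t).inner ((hcσ t).smul (hcA t))
    have hzero := integral_deriv_periodic _ _ hd hwc' hwper
    have hsplit : (∫ s in (0:ℝ)..1, (⟪η t s, σt t s • A2 (t, s) + sa (t, s) • A (t, s)⟫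
          + ⟪A (t, s), σt t s • A (t, s)⟫))
        = (∫ s in (0:ℝ)..1, ⟪η t s, σt t s • A2 (t, s) + sa (t, s) • A (t, s)⟫)
          + ∫ s in (0:ℝ)..1, ⟪A (t, s), σt t s • A (t, s)⟫ := by
      apply intervalIntegral.integral_add
      · exact (((hcη t).inner (((hcσ t).smul (hcA2 t)).add
          ((hcsa t).smul (hcA t)))).intervalIntegrable 0 1)
      · exact (((hcA t).inner ((hcσ t).smul (hcA t))).intervalIntegrable 0 1)
    have hAsA : (∫ s in (0:ℝ)..1, ⟪A (t, s), σt t s • A (t, s)⟫) = (L t) ^ 2 := by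
      have : ∀ s, ⟪A (t, s), σt t s • A (t, s)⟫ = (L t) ^ 2 * σt t s := by
        intro s
        rw [real_inner_smul_right, hAA]
        ring
      simp_rw [this]
      rw [intervalIntegral.integral_const_mul, hσmean t, mul_one]
    have hmain : (∫ s in (0:ℝ)..1, ⟪η t s, σt t s • A2 (t, s) + sa (t, s) • A (t, s)⟫)
        = -(L t) ^ 2 := by
      rw [hsplit, hAsA] at hzero
      linarith
    have hBη : ∀ s, ⟪B (t, s), η t s⟫
        = ((L t) ^ 2)⁻¹ * ⟪η t s, σt t s • A2 (t, s) + sa (t, s) • A (t, s)⟫ := by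
      intro s
      rw [hflow' t s, real_inner_smul_left]
      congr 1
      rw [real_inner_comm]
      congr 1
      abel
    simp_rw [hBη]
    rw [intervalIntegral.integral_const_mul, hmain]
    field_simp
    rw [div_self (hLpos t).ne']
  -- the squared-norm integral is linear in time
  set Q : ℝ → ℝ := fun t => ∫ s in (0:ℝ)..1, ‖η t s‖ ^ 2 with hQdef
  have hQd : ∀ t, HasDerivAt Q (-2) t := by
    intro t
    have key := deriv_under_integral (fun x s => ‖η x s‖ ^ 2)
      (fun x s => 2 * ⟪B (x, s), η x s⟫)
      (fun x => ((hcη x).norm.pow 2))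
      (by
        exact continuous_const.mul (hB.continuous.inner hη.continuous))
      (by
        intro x s
        have h1 : HasDerivAt (fun u => η u s) (B (x, s)) x := pt_hasDerivAt_fst hη x s
        have h2 := h1.inner ℝ h1
        have hfn : (fun u => ‖η u s‖ ^ 2) = fun u => ⟪η u s, η u s⟫ :=
          funext fun u => (real_inner_self_eq_norm_sq _).symm
        rw [hfn]
        refine h2.congr_deriv ?_
        rw [real_inner_comm]
        ring) t
    have : (∫ s in (0:ℝ)..1, 2 * ⟪B (t, s), η t s⟫) = -2 := by
      rw [intervalIntegral.integral_const_mul, hI t]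
      ring
    rw [this] at key
    exact key
  have hQlin : ∀ t, Q t = 2 * (tstar - t) := by
    have hconst : ∀ t, Q t + 2 * t = Q 0 + 2 * 0 := by
      intro t
      have hg : ∀ x, HasDerivAt (fun u => Q u + 2 * u) 0 x := by
        intro x
        have := (hQd x).add ((hasDerivAt_id x).const_mul 2)
        refine this.congr_deriv ?_
        ring
      exact is_const_of_deriv_eq_zero
        (fun x => (hg x).differentiableAt) (fun x => (hg x).deriv) t 0
    intro t
    have h0 : Q 0 = 2 * tstar := by
      rw [htstar]; show Q 0 = 2 * ((1/2) * Q 0); ring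
    have := hconst t
    rw [h0] at this
    linarith
  -- Wirtinger lower bound for Q
  have hL2int : ∀ t, (∫ s in (0:ℝ)..1, ‖A (t, s)‖ ^ 2) = (L t) ^ 2 := by
    intro t
    have : ∀ s : ℝ, ‖A (t, s)‖ ^ 2 = (L t) ^ 2 := fun s => by rw [hnormA]
    simp_rw [this]
    simp
  have hWir : ∀ t, Q t ≤ (1/(4*π^2)) * (L t) ^ 2 := by
    intro t
    have hv : ContDiff ℝ (⊤ : ℕ∞) (η t) := hη.comp (contDiff_const.prodMk contDiff_id)
    have hw := wirtinger_vec (η t) hv (hperη t) (hmean t)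
    have heq : (∫ s in (0:ℝ)..1, ‖deriv (η t) s‖ ^ 2) = (L t) ^ 2 := by
      rw [hderη t]
      exact hL2int t
    rw [heq] at hw
    exact hw
  -- the time-derivative energy
  set G : ℝ → ℝ := fun t => ∫ s in (0:ℝ)..1, ‖B (t, s)‖ ^ 2 with hGdef
  have hGlow : ∀ t, 0 ≤ t → t < tstar → 1 ≤ 2 * (tstar - t) * G t := by
    intro t _ htlt
    have hden : (0:ℝ) < tstar - t := by linarith
    set c : ℝ := (2 * (tstar - t))⁻¹ with hc
    have hcpos : 0 < c := by positivity
    have hexp : ∀ s : ℝ, ‖B (t, s) + c • η t s‖ ^ 2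
        = ‖B (t, s)‖ ^ 2 + 2 * (c * ⟪B (t, s), η t s⟫) + c ^ 2 * ‖η t s‖ ^ 2 := by
      intro s
      rw [norm_add_sq_real, real_inner_smul_right, norm_smul]
      rw [mul_pow, Real.norm_eq_abs, sq_abs]
    have hint1 : IntervalIntegrable (fun s => ‖B (t, s)‖ ^ 2) volume 0 1 :=
      (((hcB t).norm.pow 2)).intervalIntegrable 0 1
    have hint2 : IntervalIntegrable (fun s => 2 * (c * ⟪B (t, s), η t s⟫)) volume 0 1 :=
      ((continuous_const.mul (continuous_const.mul ((hcB t).inner (hcη t))))).intervalIntegrable 0 1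
    have hint3 : IntervalIntegrable (fun s => c ^ 2 * ‖η t s‖ ^ 2) volume 0 1 :=
      (continuous_const.mul ((hcη t).norm.pow 2)).intervalIntegrable 0 1
    have hP : (0:ℝ) ≤ ∫ s in (0:ℝ)..1, ‖B (t, s) + c • η t s‖ ^ 2 :=
      intervalIntegral.integral_nonneg zero_le_one (fun s _ => by positivity)
    have hsplit : (∫ s in (0:ℝ)..1, ‖B (t, s) + c • η t s‖ ^ 2)
        = G t + 2 * (c * (-1)) + c ^ 2 * Q t := by
      have : (∫ s in (0:ℝ)..1, ‖B (t, s) + c • η t s‖ ^ 2)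
          = (∫ s in (0:ℝ)..1, ‖B (t, s)‖ ^ 2)
            + (∫ s in (0:ℝ)..1, 2 * (c * ⟪B (t, s), η t s⟫))
            + ∫ s in (0:ℝ)..1, c ^ 2 * ‖η t s‖ ^ 2 := by
        rw [← intervalIntegral.integral_add hint1 hint2,
          ← intervalIntegral.integral_add (hint1.add hint2) hint3]
        apply intervalIntegral.integral_congr
        intro s _
        exact hexp s
      rw [this]
      congr 1
      · congr 1
        rw [intervalIntegral.integral_const_mul, intervalIntegral.integral_const_mul, hI t]
      · rw [intervalIntegral.integral_const_mul]
    rw [hsplit, hQlin t] at hP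
    have hcval : c * (2 * (tstar - t)) = 1 := by
      rw [hc]; field_simp
    nlinarith [hP, hcpos, sq_nonneg c]
  -- derivative of the squared-length functional
  set Φ2 : ℝ → ℝ := fun x => ∫ s in (0:ℝ)..1, ‖A (x, s)‖ ^ 2 with hΦ2def
  have hF2d : ∀ t, HasDerivAt Φ2 (-2 * (L t) ^ 2 * G t) t := by
    intro t
    have hL2 : (0:ℝ) < (L t) ^ 2 := pow_pos (hLpos t) 2
    have key := deriv_under_integral (fun x s => ‖A (x, s)‖ ^ 2)
      (fun x s => 2 * ⟪fderiv ℝ A (x, s) (1, 0), A (x, s)⟫)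
      (fun x => ((hcA x).norm.pow 2))
      (continuous_const.mul (((contDiff_pderiv hA ((1:ℝ), (0:ℝ))).continuous.inner
        hA.continuous)))
      (by
        intro x s
        have h1 : HasDerivAt (fun u => A (u, s)) (fderiv ℝ A (x, s) (1, 0)) x :=
          pt_hasDerivAt_fst hA x s
        have h2 := h1.inner ℝ h1
        have hfn : (fun u => ‖A (u, s)‖ ^ 2) = fun u => ⟪A (u, s), A (u, s)⟫ :=
          funext fun u => (real_inner_self_eq_norm_sq _).symm
        rw [hfn]
        refine h2.congr_deriv ?_
        rw [real_inner_comm]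
        ring) t
    -- identify the derivative integrand via Clairaut
    have hcl : ∀ s, fderiv ℝ A (t, s) (1, 0) = B1 (t, s) := by
      intro s
      have h1 : deriv (fun u => A (u, s)) t = fderiv ℝ A (t, s) (1, 0) :=
        (pt_hasDerivAt_fst hA t s).deriv
      have h2 : deriv (fun r => B (t, r)) s = B1 (t, s) :=
        (pt_hasDerivAt_snd hB t s).deriv
      have h3 := clairaut_pt hη t s
      rw [← h1, ← h2]
      exact h3
    -- integration by parts : ∫⟪B1,A⟫ = -∫⟪B,A2⟫
    have hd : ∀ s, HasDerivAt (fun r => ⟪B (t, r), A (t, r)⟫)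
        (⟪B (t, s), A2 (t, s)⟫ + ⟪B1 (t, s), A (t, s)⟫) s := fun s =>
      (pt_hasDerivAt_snd hB t s).inner ℝ (pt_hasDerivAt_snd hA t s)
    have hwper : Function.Periodic (fun s => ⟪B (t, s), A (t, s)⟫) 1 := by
      intro s
      have h1 : B (t, s + 1) = B (t, s) := hperB t s
      have h2 : A (t, s + 1) = A (t, s) := hperA t s
      simp only []
      rw [h1, h2]
    have hwc : Continuous (fun s => ⟪B (t, s), A2 (t, s)⟫ + ⟪B1 (t, s), A (t, s)⟫) :=
      ((hcB t).inner (hcA2 t)).add ((hcB1 t).inner (hcA t))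
    have hzero := integral_deriv_periodic _ _ hd hwc hwper
    have hsplit : (∫ s in (0:ℝ)..1, (⟪B (t, s), A2 (t, s)⟫ + ⟪B1 (t, s), A (t, s)⟫))
        = (∫ s in (0:ℝ)..1, ⟪B (t, s), A2 (t, s)⟫)
          + ∫ s in (0:ℝ)..1, ⟪B1 (t, s), A (t, s)⟫ :=
      intervalIntegral.integral_add (((hcB t).inner (hcA2 t)).intervalIntegrable 0 1)
        (((hcB1 t).inner (hcA t)).intervalIntegrable 0 1)
    -- pointwise : ⟪B, A2⟫ = (L²)⁻¹ σ ‖A2‖²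
    have hBA2 : ∀ s, ⟪B (t, s), A2 (t, s)⟫
        = ((L t) ^ 2)⁻¹ * (σt t s * ‖A2 (t, s)‖ ^ 2) := by
      intro s
      rw [hflow' t s, real_inner_smul_left]
      congr 1
      rw [inner_add_left, real_inner_smul_left, real_inner_smul_left, hAA2,
        real_inner_self_eq_norm_sq]
      ring
    set Kbar : ℝ := ∫ s in (0:ℝ)..1, σt t s * ‖A2 (t, s)‖ ^ 2 with hKdef
    have hIB1A : (∫ s in (0:ℝ)..1, ⟪B1 (t, s), A (t, s)⟫) = -(((L t) ^ 2)⁻¹ * Kbar) := by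
      have h1 : (∫ s in (0:ℝ)..1, ⟪B (t, s), A2 (t, s)⟫) = ((L t) ^ 2)⁻¹ * Kbar := by
        simp_rw [hBA2]
        rw [intervalIntegral.integral_const_mul]
      rw [hsplit, h1] at hzero
      linarith
    -- hmult : Kbar = L² ∫ sa² + ∫ σ² ‖A2‖²
    set X : ℝ := ∫ s in (0:ℝ)..1, sa (t, s) ^ 2 with hXdef
    set Y : ℝ := ∫ s in (0:ℝ)..1, σt t s ^ 2 * ‖A2 (t, s)‖ ^ 2 with hYdef
    have hmult' : ∀ s, sa2 (t, s)
        = ((L t) ^ 2)⁻¹ * σt t s * ‖A2 (t, s)‖ ^ 2 - ((L t) ^ 2)⁻¹ * Kbar := by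
      intro s
      have := hmult t s
      rw [hsa2e t s] at this
      simp_rw [hA2e t] at this
      rw [hKdef]
      linarith [this]
    have hparts2 : (∫ s in (0:ℝ)..1, σt t s * sa2 (t, s)) = -X := by
      have hd2 : ∀ s, HasDerivAt (fun r => σt t r * sa (t, r))
          (sa (t, s) * sa (t, s) + σt t s * sa2 (t, s)) s := by
        intro s
        exact (pt_hasDerivAt_snd hσt t s).mul (pt_hasDerivAt_snd hsa t s)
      have hper2 : Function.Periodic (fun s => σt t s * sa (t, s)) 1 := by
        intro s
        have h1 : sa (t, s + 1) = sa (t, s) := hpersa t s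
        simp only []
        rw [hperσ t s, h1]
      have hc2 : Continuous fun s => sa (t, s) * sa (t, s) + σt t s * sa2 (t, s) :=
        ((hcsa t).mul (hcsa t)).add ((hcσ t).mul (hcsa2 t))
      have hz2 := integral_deriv_periodic _ _ hd2 hc2 hper2
      have hs2 : (∫ s in (0:ℝ)..1, (sa (t, s) * sa (t, s) + σt t s * sa2 (t, s)))
          = (∫ s in (0:ℝ)..1, sa (t, s) * sa (t, s))
            + ∫ s in (0:ℝ)..1, σt t s * sa2 (t, s) :=
        intervalIntegral.integral_add (((hcsa t).mul (hcsa t)).intervalIntegrable 0 1)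
          (((hcσ t).mul (hcsa2 t)).intervalIntegrable 0 1)
      rw [hs2] at hz2
      have : (∫ s in (0:ℝ)..1, sa (t, s) * sa (t, s)) = X := by
        rw [hXdef]
        apply intervalIntegral.integral_congr
        intro s _
        ring
      rw [this] at hz2
      linarith
    have hKval : Kbar = (L t) ^ 2 * X + Y := by
      have h1 : (∫ s in (0:ℝ)..1, σt t s * sa2 (t, s))
          = ((L t) ^ 2)⁻¹ * Y - ((L t) ^ 2)⁻¹ * Kbar := by
        have hpt : ∀ s, σt t s * sa2 (t, s)
            = ((L t) ^ 2)⁻¹ * (σt t s ^ 2 * ‖A2 (t, s)‖ ^ 2)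
              + (-(((L t) ^ 2)⁻¹ * Kbar)) * σt t s := by
          intro s
          rw [hmult' s]
          ring
        simp_rw [hpt]
        rw [intervalIntegral.integral_add
          (f := fun s => (L t ^ 2)⁻¹ * (σt t s ^ 2 * ‖A2 (t, s)‖ ^ 2))
          (g := fun s => -((L t ^ 2)⁻¹ * Kbar) * σt t s)
          ((continuous_const.mul (((hcσ t).pow 2).mul
            ((hcA2 t).norm.pow 2))).intervalIntegrable 0 1)
          ((continuous_const.mul (hcσ t)).intervalIntegrable 0 1),
          intervalIntegral.integral_const_mul, intervalIntegral.integral_const_mul,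
          hσmean t, hYdef]
        ring
      rw [hparts2] at h1
      have hL2ne : ((L t) ^ 2) ≠ 0 := ne_of_gt hL2
      field_simp at h1
      rw [eq_div_iff hL2ne] at h1
      nlinarith [h1]
    -- G in terms of X, Y
    have hBnorm : ∀ s, ‖B (t, s)‖ ^ 2
        = (((L t) ^ 2)⁻¹) ^ 2 * (sa (t, s) ^ 2 * (L t) ^ 2
          + σt t s ^ 2 * ‖A2 (t, s)‖ ^ 2) := by
      intro s
      rw [hflow' t s, norm_smul, mul_pow, Real.norm_eq_abs, sq_abs]
      congr 1
      rw [norm_add_sq_real, real_inner_smul_left, real_inner_smul_right, hAA2,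
        norm_smul, norm_smul, Real.norm_eq_abs, Real.norm_eq_abs, mul_pow, mul_pow,
        sq_abs, sq_abs, hnormA]
      ring
    have hGval : (L t) ^ 2 * ((L t) ^ 2 * G t) = Kbar := by
      have hG1 : G t = (((L t) ^ 2)⁻¹) ^ 2 * ((L t) ^ 2 * X + Y) := by
        rw [hGdef]
        simp_rw [hBnorm]
        rw [intervalIntegral.integral_const_mul,
          intervalIntegral.integral_add
            (f := fun s => sa (t, s) ^ 2 * (L t) ^ 2)
            (g := fun s => σt t s ^ 2 * ‖A2 (t, s)‖ ^ 2)
            ((((hcsa t).pow 2).mul continuous_const).intervalIntegrable 0 1)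
            ((((hcσ t).pow 2).mul ((hcA2 t).norm.pow 2)).intervalIntegrable 0 1),
          intervalIntegral.integral_mul_const]
        rw [hXdef, hYdef]
        ring
      rw [hG1, hKval]
      field_simp
      field_simp [(hLpos t).ne']
    have hval : (∫ s in (0:ℝ)..1, 2 * ⟪fderiv ℝ A (t, s) (1, 0), A (t, s)⟫)
        = -2 * (L t) ^ 2 * G t := by
      simp_rw [hcl]
      rw [intervalIntegral.integral_const_mul, hIB1A, ← hGval]
      field_simp
    rw [hval] at key
    exact key
  -- conclusion
  intro t ht
  have htpos : 0 < tstar := lt_of_le_of_lt ht.1 ht.2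
  have hden : 0 < tstar - t := by linarith [ht.2]
  constructor
  · -- lower bound (Wirtinger)
    have hq := hQlin t
    have hw := hWir t
    have hπ := Real.pi_pos
    have h8 : 8 * π ^ 2 * (tstar - t) ≤ (L t) ^ 2 := by
      rw [hq] at hw
      have h4 : (0:ℝ) < 4 * π ^ 2 := by positivity
      have h5 := mul_le_mul_of_nonneg_left hw h4.le
      have hr : 4 * π ^ 2 * ((1/(4*π^2)) * (L t) ^ 2) = (L t) ^ 2 := by field_simp
      nlinarith [h5, hr]
    have hlhs : (2 * Real.sqrt 2 * π * Real.sqrt (tstar - t)) ^ 2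
        = 8 * π ^ 2 * (tstar - t) := by
      rw [mul_pow, mul_pow, mul_pow, Real.sq_sqrt (by norm_num : (0:ℝ) ≤ 2),
        Real.sq_sqrt hden.le]
      ring
    have h9 : (2 * Real.sqrt 2 * π * Real.sqrt (tstar - t)) ^ 2 ≤ (L t) ^ 2 := by
      rw [hlhs]; exact h8
    have hnn : 0 ≤ 2 * Real.sqrt 2 * π * Real.sqrt (tstar - t) := by positivity
    calc 2 * Real.sqrt 2 * π * Real.sqrt (tstar - t)
        = Real.sqrt ((2 * Real.sqrt 2 * π * Real.sqrt (tstar - t)) ^ 2) :=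
          (Real.sqrt_sq hnn).symm
      _ ≤ Real.sqrt ((L t) ^ 2) := Real.sqrt_le_sqrt h9
      _ = L t := Real.sqrt_sq (hLpos t).le
  · -- upper bound (comparison)
    have hanti : AntitoneOn (fun x => Φ2 x / (tstar - x)) (Set.Ico 0 tstar) := by
      apply antitoneOn_of_deriv_nonpos (convex_Ico 0 tstar)
      · apply ContinuousOn.div
        · exact fun x _ => ((hF2d x).differentiableAt.continuousAt).continuousWithinAt
        · exact (continuous_const.sub continuous_id).continuousOn
        · intro x hx
          exact ne_of_gt (by linarith [hx.2] : (0:ℝ) < tstar - x)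
      · rw [interior_Ico]
        intro x hx
        have hdx : (0:ℝ) < tstar - x := by linarith [hx.2]
        have hden' : HasDerivAt (fun y : ℝ => tstar - y) (-1) x := by
          simpa using (hasDerivAt_id x).const_sub tstar
        exact (((hF2d x).div hden'
          (ne_of_gt hdx)).differentiableAt).differentiableWithinAt
      · rw [interior_Ico]
        intro x hx
        have hdx : (0:ℝ) < tstar - x := by linarith [hx.2]
        have hden' : HasDerivAt (fun y : ℝ => tstar - y) (-1) x := by
          simpa using (hasDerivAt_id x).const_sub tstar
        have hdiv := (hF2d x).div hden' (ne_of_gt hdx)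
        rw [HasDerivAt.deriv (f := fun x => Φ2 x / (tstar - x)) hdiv]
        apply div_nonpos_of_nonpos_of_nonneg
        · have hG1 := hGlow x hx.1.le hx.2
          have hΦ2x : Φ2 x = (L x) ^ 2 := hL2int x
          rw [hΦ2x]
          have hLx := pow_pos (hLpos x) 2
          nlinarith [hG1, hLx]
        · positivity
    have h0mem : (0:ℝ) ∈ Set.Ico (0:ℝ) tstar := ⟨le_refl 0, htpos⟩
    have hcomp := hanti h0mem ht ht.1
    simp only [] at hcomp
    have hΦ2t : Φ2 t = (L t) ^ 2 := hL2int t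
    have hΦ20 : Φ2 0 = (L 0) ^ 2 := hL2int 0
    rw [hΦ2t, hΦ20, sub_zero] at hcomp
    have hsq : (L t) ^ 2 ≤ (L 0 * Real.sqrt ((tstar - t) / tstar)) ^ 2 := by
      rw [mul_pow, Real.sq_sqrt (div_nonneg hden.le htpos.le), ← mul_div_assoc,
        le_div_iff₀ htpos]
      rw [div_le_div_iff₀ hden htpos] at hcomp
      linarith [hcomp]
    have hnn : 0 ≤ L 0 * Real.sqrt ((tstar - t) / tstar) :=
      mul_nonneg (hLpos 0).le (Real.sqrt_nonneg _)
    calc L t = Real.sqrt ((L t) ^ 2) := (Real.sqrt_sq (hLpos t).le).symm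
      _ ≤ Real.sqrt ((L 0 * Real.sqrt ((tstar - t) / tstar)) ^ 2) := Real.sqrt_le_sqrt hsq
      _ = _ := Real.sqrt_sq hnn


end helpers
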